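/- Let U be any variety of Ω-algebras, and let V and W be subvarieties of U with W idempotent, such that there exist binary terms f(x,y) and g(x,y) with V satisfying f(x,y) = x and g(x,y) = y and W satisfying f(x,y) = g(x,y). Then the relative Mal'tsev product V ∘_U W is a variety. -/

import Mathlib

structure Signature where
  symbols : Type
  arity : symbols → ℕ

structure Alg (S : Signature) where
  carrier : Type
  op : ∀ ω : S.symbols, (Fin (S.arity ω) → carrier) → carrier
  nonempty : Nonempty carrier

inductive Term (S : Signature) (X : Type) : Type
  | var : X → Term S X
  | app : ∀ ω : S.symbols, (Fin (S.arity ω) → Term S X) → Term S X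

def Term.eval {S : Signature} {X : Type} (A : Alg S) (env : X → A.carrier) :
    Term S X → A.carrier
  | .var x => env x
  | .app ω ts => A.op ω fun i => (ts i).eval A env

/-- The algebra `A` satisfies the identity `u = v`. -/
def Alg.sat {S : Signature} (A : Alg S) {X : Type} (u v : Term S X) : Prop :=
  ∀ env : X → A.carrier, u.eval A env = v.eval A env

/-- An identity: a pair of terms in the countably many variables `x₀, x₁, …`. -/
abbrev Ident (S : Signature) := Term S ℕ × Term S ℕ

/-- `A` lies in the variety axiomatized by the set of identities `E`. -/
def Alg.Models {S : Signature} (A : Alg S) (E : Set (Ident S)) : Prop :=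
  ∀ e ∈ E, A.sat e.1 e.2

/-- The identity `u = v` holds in the variety axiomatized by `E`. -/
def Conseq {S : Signature} (E : Set (Ident S)) {X : Type} (u v : Term S X) : Prop :=
  ∀ A : Alg S, A.Models E → A.sat u v

/-- `a` is an idempotent element of `A`. -/
def Alg.IsIdem {S : Signature} (A : Alg S) (a : A.carrier) : Prop :=
  ∀ ω : S.symbols, A.op ω (fun _ => a) = a

/-- `B` is (the universe of) a subalgebra of `A`. -/
def Alg.IsSubuniverse {S : Signature} (A : Alg S) (B : Set A.carrier) : Prop :=
  ∀ ω (a : Fin (S.arity ω) → A.carrier), (∀ i, a i ∈ B) → A.op ω a ∈ B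

/-- The subalgebra of `A` on a nonempty subuniverse `B`. -/
def Alg.subAlg {S : Signature} (A : Alg S) (B : Set A.carrier)
    (h : A.IsSubuniverse B) (hne : B.Nonempty) : Alg S where
  carrier := B
  op ω a := ⟨A.op ω fun i => (a i : A.carrier), h ω _ fun i => (a i).2⟩
  nonempty := hne.to_subtype

/-- A congruence of `A`: an equivalence relation compatible with all operations. -/
structure Congruence {S : Signature} (A : Alg S) where
  rel : A.carrier → A.carrier → Prop
  iseqv : Equivalence rel
  compat : ∀ ω (a b : Fin (S.arity ω) → A.carrier),
    (∀ i, rel (a i) (b i)) → rel (A.op ω a) (A.op ω b)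

def Congruence.setoid {S : Signature} {A : Alg S} (θ : Congruence A) :
    Setoid A.carrier := ⟨θ.rel, θ.iseqv⟩

/-- The quotient algebra `A/θ`. -/
noncomputable def Alg.quot {S : Signature} (A : Alg S) (θ : Congruence A) : Alg S where
  carrier := Quotient θ.setoid
  op ω q := Quotient.mk θ.setoid (A.op ω fun i => (q i).out)
  nonempty := A.nonempty.map (Quotient.mk θ.setoid)

/-- Membership in the Mal'tsev product of the varieties axiomatized by `V` and `W`:
`A` has a congruence `θ` with `A/θ` in (the variety of) `W` such that every
`θ`-class which is a subalgebra of `A` is an algebra in (the variety of) `V`. -/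
def InMaltsev {S : Signature} (V W : Set (Ident S)) (A : Alg S) : Prop :=
  ∃ θ : Congruence A, (A.quot θ).Models W ∧
    ∀ a : A.carrier, ∀ h : A.IsSubuniverse {b | θ.rel a b},
      (A.subAlg {b | θ.rel a b} h ⟨a, θ.iseqv.refl a⟩).Models V

/-- A class of algebras is a variety iff it is axiomatized by some set of identities. -/
def IsVarietyClass {S : Signature} (K : Alg S → Prop) : Prop :=
  ∃ E : Set (Ident S), ∀ A : Alg S, K A ↔ A.Models E

/-- Membership in the Mal'tsev product of `V` and `W` relative to `U`:
the algebras of `U` lying in `V ∘ W`. -/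
def InMaltsevRel {S : Signature} (U V W : Set (Ident S)) (A : Alg S) : Prop :=
  A.Models U ∧ InMaltsev V W A

/-!
The class is axiomatized by its own equational theory `E`. In a member `M` with witnessing
congruence `θ`, idempotence of `W` makes every `θ`-class a subalgebra, hence an algebra in `V`,
on which `f` and `g` are the two projections; since `W ⊨ p ≈ q` puts the values of `p` and `q`
in one `θ`-class, `M ⊨ f(p,q) ≈ p` and `M ⊨ g(p,q) ≈ q`. So if `A ⊨ E`, instances of these
identities make `x R y :⟺ f(x,y) = x ∧ g(x,y) = y` a congruence of `A` with `A/R ⊨ W`.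
An `R`-class satisfies each `V`-identity `u ≈ v` because `E` contains `u ≈ v` with every
variable `xᵢ` replaced by a term that is constant modulo `f ≈ g` (so the instance lives in one
`θ`-class of every member) but evaluates to `xᵢ` on an `R`-class of `A`.
-/

section Terms

variable {S : Signature}

def Term.subst {X Y : Type} : Term S X → (X → Term S Y) → Term S Y
  | .var x, σ => σ x
  | .app ω ts, σ => .app ω fun i => (ts i).subst σ

theorem Term.eval_subst {X Y : Type} (A : Alg S) (σ : X → Term S Y) (env : Y → A.carrier) :
    ∀ t : Term S X, (t.subst σ).eval A env = t.eval A fun x => (σ x).eval A env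
  | .var _ => rfl
  | .app ω ts => congrArg (A.op ω) (funext fun i => Term.eval_subst A σ env (ts i))

def Term.subst₂ {X : Type} (h : Term S (Fin 2)) (s t : Term S X) : Term S X :=
  h.subst ![s, t]

theorem Term.eval_subst₂ {X : Type} (A : Alg S) (h : Term S (Fin 2)) (s t : Term S X)
    (env : X → A.carrier) :
    (h.subst₂ s t).eval A env = h.eval A ![s.eval A env, t.eval A env] := by
  rw [Term.subst₂, Term.eval_subst]
  congr 1
  funext i
  fin_cases i <;> rfl

def Term.varBound : Term S ℕ → ℕ
  | .var n => n + 1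
  | .app _ ts => Finset.univ.sup fun i => (ts i).varBound

theorem Term.eval_congr_of_varBound (A : Alg S) {e₁ e₂ : ℕ → A.carrier} :
    ∀ t : Term S ℕ, (∀ n < t.varBound, e₁ n = e₂ n) → t.eval A e₁ = t.eval A e₂
  | .var n, h => h n n.lt_succ_self
  | .app ω ts, h => congrArg (A.op ω) <| funext fun i =>
      Term.eval_congr_of_varBound A (ts i) fun n hn =>
        h n (hn.trans_le (Finset.le_sup (f := fun i => (ts i).varBound) (Finset.mem_univ i)))

end Terms

section Algebras

variable {S : Signature}

theorem Alg.eval_subAlg (A : Alg S) {B : Set A.carrier} (h : A.IsSubuniverse B)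
    (hne : B.Nonempty) {X : Type} (env : X → (A.subAlg B h hne).carrier) :
    ∀ t : Term S X,
      Subtype.val (t.eval (A.subAlg B h hne) env) = t.eval A fun x => Subtype.val (env x)
  | .var _ => rfl
  | .app ω ts => congrArg (A.op ω) (funext fun i => Alg.eval_subAlg A h hne env (ts i))

theorem Alg.eval_eq_of_subAlg_sat (A : Alg S) {B : Set A.carrier} {h : A.IsSubuniverse B}
    {hne : B.Nonempty} {X : Type} {u v : Term S X} (hsat : (A.subAlg B h hne).sat u v)
    (e : X → A.carrier) (he : ∀ x, e x ∈ B) : u.eval A e = v.eval A e :=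
  (A.eval_subAlg h hne _ u).symm.trans <|
    (congrArg Subtype.val (hsat fun x => ⟨e x, he x⟩)).trans (A.eval_subAlg h hne _ v)

namespace Congruence

variable {A : Alg S} (θ : Congruence A)

theorem rel_of_mk_eq_mk {a b : A.carrier}
    (h : Quotient.mk θ.setoid a = Quotient.mk θ.setoid b) : θ.rel a b :=
  Quotient.exact h

theorem quot_op_mk (ω : S.symbols) (a : Fin (S.arity ω) → A.carrier) :
    (A.quot θ).op ω (fun i => Quotient.mk θ.setoid (a i)) = Quotient.mk θ.setoid (A.op ω a) :=
  Quotient.sound <| θ.compat ω _ _ fun _ => θ.rel_of_mk_eq_mk (Quotient.out_eq _)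

theorem eval_quot {X : Type} (env : X → A.carrier) :
    ∀ t : Term S X, t.eval (A.quot θ) (fun x => Quotient.mk θ.setoid (env x))
      = Quotient.mk θ.setoid (t.eval A env)
  | .var _ => rfl
  | .app ω ts =>
    (congrArg ((A.quot θ).op ω) (funext fun i => eval_quot env (ts i))).trans
      (θ.quot_op_mk ω _)

theorem sat_quot_iff {X : Type} {p q : Term S X} :
    (A.quot θ).sat p q ↔ ∀ e, θ.rel (p.eval A e) (q.eval A e) := by
  refine ⟨fun h e => θ.rel_of_mk_eq_mk ?_, fun h env => ?_⟩
  · rw [← θ.eval_quot, ← θ.eval_quot]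
    exact h _
  · rw [show env = fun x => Quotient.mk θ.setoid (env x).out from
      funext fun x => (Quotient.out_eq _).symm, θ.eval_quot, θ.eval_quot]
    exact Quotient.sound (h _)

theorem isSubuniverse_class (hidem : ∀ q, (A.quot θ).IsIdem q) (a : A.carrier) :
    A.IsSubuniverse {b | θ.rel a b} := by
  intro ω b hb
  have hconst : θ.rel (A.op ω fun _ => a) a :=
    θ.rel_of_mk_eq_mk ((θ.quot_op_mk ω fun _ => a).symm.trans (hidem _ ω))
  exact θ.iseqv.trans (θ.iseqv.symm hconst) (θ.compat ω _ _ hb)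

end Congruence

def eqTheory (K : Alg S → Prop) : Set (Ident S) :=
  {e | ∀ M, K M → M.sat e.1 e.2}

theorem isVarietyClass_of_models_eqTheory {K : Alg S → Prop}
    (h : ∀ A, A.Models (eqTheory K) → K A) : IsVarietyClass K :=
  ⟨eqTheory K, fun A => ⟨fun hA _ he => he A hA, h A⟩⟩

theorem Alg.sat_of_models_eqTheory {K : Alg S → Prop} {A : Alg S}
    (hA : A.Models (eqTheory K)) {X : Type} [Encodable X] {u v : Term S X}
    (h : ∀ M, K M → M.sat u v) : A.sat u v := by
  have hmem : (u.subst (Term.var ∘ Encodable.encode), v.subst (Term.var ∘ Encodable.encode))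
      ∈ eqTheory K := by
    intro M hM env
    simp only [Term.eval_subst]
    exact h M hM _
  intro e
  have := hA _ hmem (Function.extend Encodable.encode e fun _ => A.nonempty.some)
  simp only [Term.eval_subst, Function.comp_apply, Term.eval,
    Encodable.encode_injective.extend_apply] at this
  exact this

end Algebras

section Maltsev

variable {S : Signature} {U V W : Set (Ident S)} {f g : Term S (Fin 2)}

def projRel (f g : Term S (Fin 2)) (A : Alg S) (x y : A.carrier) : Prop :=
  f.eval A ![x, y] = x ∧ g.eval A ![x, y] = y

/-- The left comb `h_{K-1}(… h₁(h₀(x₀, x₁), x₂) …, x_K)` with `hⱼ = g` for `j < i` and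
`hⱼ = f` for `i ≤ j`. Modulo `f ≈ g` it does not depend on `i`, while on a set of values where
`f`, `g` are the two projections it evaluates to `x_{min i K}`. -/
def pickTerm (f g : Term S (Fin 2)) (i : ℕ) : ℕ → Term S ℕ
  | 0 => .var 0
  | K + 1 => (if i ≤ K then f else g).subst₂ (pickTerm f g i K) (.var (K + 1))

theorem pickTerm_eval_eq_of_sat {B : Alg S} (hfg : B.sat f g) (e : ℕ → B.carrier)
    (i j K : ℕ) : (pickTerm f g i K).eval B e = (pickTerm f g j K).eval B e := by
  induction K with
  | zero => rfl
  | succ K ih =>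
    have hsel : ∀ (b : Prop) [Decidable b] env, (if b then f else g).eval B env = g.eval B env :=
      fun b _ env => by split_ifs; exacts [hfg env, rfl]
    rw [pickTerm, pickTerm, Term.eval_subst₂, Term.eval_subst₂, ih, hsel, hsel]

theorem pickTerm_eval_of_projRel {A : Alg S} {e : ℕ → A.carrier}
    (he : ∀ m n, projRel f g A (e m) (e n)) (i K : ℕ) :
    (pickTerm f g i K).eval A e = e (min i K) := by
  induction K with
  | zero => rw [Nat.min_zero]; rfl
  | succ K ih =>
    rw [pickTerm, Term.eval_subst₂, ih]
    split_ifs with hi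
    · rw [min_eq_left hi, min_eq_left (by omega)]
      exact (he _ _).1
    · rw [min_eq_right (by omega : K ≤ i), min_eq_right (by omega : K + 1 ≤ i)]
      exact (he _ _).2

section Members

variable {M : Alg S} {θ : Congruence M}

theorem eval_eq_of_rel_of_conseq (hidem : ∀ q, (M.quot θ).IsIdem q)
    (hVc : ∀ a : M.carrier, ∀ h : M.IsSubuniverse {b | θ.rel a b},
      (M.subAlg {b | θ.rel a b} h ⟨a, θ.iseqv.refl a⟩).Models V)
    {X : Type} {u v : Term S X} (huv : Conseq V u v) (a : M.carrier) (e : X → M.carrier)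
    (he : ∀ x, θ.rel a (e x)) : u.eval M e = v.eval M e :=
  M.eval_eq_of_subAlg_sat (huv _ (hVc a (θ.isSubuniverse_class hidem a))) e he

theorem InMaltsev.projRel_eval_of_conseq
    (hWidem : ∀ A : Alg S, A.Models W → ∀ a : A.carrier, A.IsIdem a)
    (hf : Conseq V f (Term.var 0)) (hg : Conseq V g (Term.var 1)) (hM : InMaltsev V W M)
    {X : Type} {p q : Term S X} (hpq : Conseq W p q) (e : X → M.carrier) :
    projRel f g M (p.eval M e) (q.eval M e) := by
  obtain ⟨θ, hWq, hVc⟩ := hM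
  have hrel : θ.rel (p.eval M e) (q.eval M e) := (θ.sat_quot_iff.1 (hpq _ hWq)) e
  have hclass : ∀ i, θ.rel (p.eval M e) (![p.eval M e, q.eval M e] i) :=
    Fin.forall_fin_two.2 ⟨θ.iseqv.refl _, hrel⟩
  exact ⟨eval_eq_of_rel_of_conseq (hWidem _ hWq) hVc hf _ _ hclass,
    eval_eq_of_rel_of_conseq (hWidem _ hWq) hVc hg _ _ hclass⟩

theorem InMaltsev.sat_subst_pickTerm
    (hWidem : ∀ A : Alg S, A.Models W → ∀ a : A.carrier, A.IsIdem a)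
    (hfg : Conseq W f g) (hM : InMaltsev V W M) {u v : Term S ℕ} (huv : (u, v) ∈ V) (K : ℕ) :
    M.sat (u.subst (pickTerm f g · K)) (v.subst (pickTerm f g · K)) := by
  obtain ⟨θ, hWq, hVc⟩ := hM
  intro e
  rw [Term.eval_subst, Term.eval_subst]
  exact eval_eq_of_rel_of_conseq (hWidem _ hWq) hVc (fun _ hB => hB _ huv) _ _ fun n =>
    θ.sat_quot_iff.1 (fun env => pickTerm_eval_eq_of_sat (hfg _ hWq) env 0 n K) e

end Members

def SatProjIdentities (W : Set (Ident S)) (f g : Term S (Fin 2)) (A : Alg S) : Prop :=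
  ∀ {X : Type} [Encodable X] {p q : Term S X}, Conseq W p q →
    ∀ e : X → A.carrier, projRel f g A (p.eval A e) (q.eval A e)

namespace SatProjIdentities

variable {A : Alg S}

theorem refl (hA : SatProjIdentities W f g A) (x : A.carrier) : projRel f g A x x :=
  hA (p := .var ()) (q := .var ()) (fun _ _ _ => rfl) fun _ => x

theorem symm (hA : SatProjIdentities W f g A) (hfg : Conseq W f g) {x y : A.carrier}
    (h : projRel f g A x y) : projRel f g A y x := by
  let v : Fin 2 → Term S (Fin 2) := Term.var
  have hpq : Conseq W (g.subst₂ (v 0) (v 1)) (f.subst₂ (v 0) (v 1)) :=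
    fun B hB env => by rw [Term.eval_subst₂, Term.eval_subst₂]; exact (hfg B hB _).symm
  convert hA hpq ![x, y] using 1 <;> rw [Term.eval_subst₂]
  exacts [h.2.symm, h.1.symm]

theorem trans (hA : SatProjIdentities W f g A) (hfg : Conseq W f g) {x y z : A.carrier}
    (hxy : projRel f g A x y) (hyz : projRel f g A y z) : projRel f g A x z := by
  let v : Fin 3 → Term S (Fin 3) := Term.var
  have hpq : Conseq W (f.subst₂ (f.subst₂ (v 0) (v 1)) (f.subst₂ (v 1) (v 2)))
      (g.subst₂ (g.subst₂ (v 0) (v 1)) (g.subst₂ (v 1) (v 2))) := fun B hB env => by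
    have hfgB : ∀ env, f.eval B env = g.eval B env := hfg B hB
    simp only [Term.eval_subst₂, hfgB]
  convert hA hpq ![x, y, z] using 1 <;> simp only [Term.eval_subst₂]
  · show x = f.eval A ![f.eval A ![x, y], f.eval A ![y, z]]
    rw [hxy.1, hyz.1, hxy.1]
  · show z = g.eval A ![g.eval A ![x, y], g.eval A ![y, z]]
    rw [hxy.2, hyz.2, hyz.2]

theorem compat (hA : SatProjIdentities W f g A) (hfg : Conseq W f g) (ω : S.symbols)
    (a b : Fin (S.arity ω) → A.carrier) (hab : ∀ i, projRel f g A (a i) (b i)) :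
    projRel f g A (A.op ω a) (A.op ω b) := by
  let v : Fin (S.arity ω) × Fin 2 → Term S (Fin (S.arity ω) × Fin 2) := Term.var
  have hpq : Conseq W (.app ω fun i => f.subst₂ (v (i, 0)) (v (i, 1)))
      (.app ω fun i => g.subst₂ (v (i, 0)) (v (i, 1))) := fun B hB env => by
    have hfgB : ∀ env, f.eval B env = g.eval B env := hfg B hB
    simp only [Term.eval, Term.eval_subst₂, hfgB]
  convert hA hpq (fun ik => ![a ik.1, b ik.1] ik.2) using 1
  · exact congrArg (A.op ω) (funext fun i => by rw [Term.eval_subst₂]; exact (hab i).1.symm)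
  · exact congrArg (A.op ω) (funext fun i => by rw [Term.eval_subst₂]; exact (hab i).2.symm)

def congruence (hA : SatProjIdentities W f g A) (hfg : Conseq W f g) : Congruence A where
  rel := projRel f g A
  iseqv := ⟨hA.refl, hA.symm hfg, hA.trans hfg⟩
  compat := hA.compat hfg

end SatProjIdentities

section EqTheory

variable {A : Alg S}

theorem satProjIdentities_of_models_eqTheory
    (hWidem : ∀ A : Alg S, A.Models W → ∀ a : A.carrier, A.IsIdem a)
    (hf : Conseq V f (Term.var 0)) (hg : Conseq V g (Term.var 1))
    (hA : A.Models (eqTheory (InMaltsevRel U V W))) : SatProjIdentities W f g A := by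
  intro X _ p q hpq e
  have hproj : ∀ M, InMaltsevRel U V W M → ∀ e, projRel f g M (p.eval M e) (q.eval M e) :=
    fun M hM => hM.2.projRel_eval_of_conseq hWidem hf hg hpq
  have hfpq := A.sat_of_models_eqTheory hA (u := f.subst₂ p q) (v := p) fun M hM e => by
    rw [Term.eval_subst₂]; exact (hproj M hM e).1
  have hgpq := A.sat_of_models_eqTheory hA (u := g.subst₂ p q) (v := q) fun M hM e => by
    rw [Term.eval_subst₂]; exact (hproj M hM e).2
  exact ⟨(Term.eval_subst₂ ..).symm.trans (hfpq e), (Term.eval_subst₂ ..).symm.trans (hgpq e)⟩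

theorem eval_eq_of_models_eqTheory
    (hWidem : ∀ A : Alg S, A.Models W → ∀ a : A.carrier, A.IsIdem a) (hfg : Conseq W f g)
    (hA : A.Models (eqTheory (InMaltsevRel U V W))) {u v : Term S ℕ} (huv : (u, v) ∈ V)
    {e : ℕ → A.carrier} (he : ∀ m n, projRel f g A (e m) (e n)) :
    u.eval A e = v.eval A e := by
  set K := max u.varBound v.varBound
  have h := hA (u.subst (pickTerm f g · K), v.subst (pickTerm f g · K))
    (fun M hM => hM.2.sat_subst_pickTerm hWidem hfg huv K) e
  simp only [Term.eval_subst, pickTerm_eval_of_projRel he] at h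
  have hpick : ∀ t : Term S ℕ, t.varBound ≤ K → t.eval A (fun n => e (min n K)) = t.eval A e :=
    fun t ht => t.eval_congr_of_varBound A fun n hn => by rw [min_eq_left (by omega)]
  rwa [hpick u (le_max_left _ _), hpick v (le_max_right _ _)] at h

theorem inMaltsevRel_of_models_eqTheory
    (hWidem : ∀ A : Alg S, A.Models W → ∀ a : A.carrier, A.IsIdem a)
    (hf : Conseq V f (Term.var 0)) (hg : Conseq V g (Term.var 1)) (hfg : Conseq W f g)
    (hA : A.Models (eqTheory (InMaltsevRel U V W))) : InMaltsevRel U V W A := by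
  have hproj : SatProjIdentities W f g A :=
    satProjIdentities_of_models_eqTheory hWidem hf hg hA
  let θ := hproj.congruence hfg
  refine ⟨fun e he => hA e fun M hM => hM.1 e he, θ, ?_, fun a hsub e he env => Subtype.ext ?_⟩
  · exact fun e he => θ.sat_quot_iff.2 (hproj (X := ℕ) fun B hB => hB e he)
  · have hclass : ∀ m n, projRel f g A (env m).1 (env n).1 := fun m n =>
      hproj.trans hfg (hproj.symm hfg (env m).2) (env n).2
    exact (A.eval_subAlg hsub _ env e.1).trans <|
      (eval_eq_of_models_eqTheory hWidem hfg hA he hclass).trans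
        (A.eval_subAlg hsub _ env e.2).symm

end EqTheory

end Maltsev

theorem stmt_12_general (S : Signature)
    (U V W : Set (Ident S))
    (hWidem : ∀ A : Alg S, A.Models W → ∀ a : A.carrier, A.IsIdem a)
    (f g : Term S (Fin 2))
    (hf : Conseq V f (Term.var 0))
    (hg : Conseq V g (Term.var 1))
    (hfg : Conseq W f g) :
    IsVarietyClass (InMaltsevRel U V W) :=
  isVarietyClass_of_models_eqTheory fun _ => inMaltsevRel_of_models_eqTheory hWidem hf hg hfg

/-- Let `U` be any variety, and `V`, `W` subvarieties of `U`
with `W` idempotent, such that there are binary terms `f(x,y)`, `g(x,y)` with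
`V ⊨ f(x,y) = x`, `V ⊨ g(x,y) = y` and `W ⊨ f(x,y) = g(x,y)`. Then the relative
Mal'tsev product `V ∘_U W` is a variety. -/
theorem stmt_12 (S : Signature) (h0 : ∀ ω : S.symbols, 0 < S.arity ω)
    (U V W : Set (Ident S))
    (hVU : ∀ A : Alg S, A.Models V → A.Models U)
    (hWU : ∀ A : Alg S, A.Models W → A.Models U)
    (hWidem : ∀ A : Alg S, A.Models W → ∀ a : A.carrier, A.IsIdem a)
    (f g : Term S (Fin 2))
    (hf : Conseq V f (Term.var 0))
    (hg : Conseq V g (Term.var 1))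
    (hfg : Conseq W f g) :
    IsVarietyClass (InMaltsevRel U V W) :=
  stmt_12_general S U V W hWidem f g hf hg hfg
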